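/- Let F be the terminal cost function F(r, θ, V) = θ²(√2·√(V²+2a_m r) − V)/a_m + |θ|³/(3ω_m) + √2·(V²+2a_m r)^{3/2}(23V² + 40a_m² + 46a_m r)/(240 a_m³) − (V³/(3a_m) + V r²/a_m + 2V³ r/(3a_m²) + 2V⁵/(15a_m³)). Along the flow ṙ = −V, θ̇ = 0, V̇ = −a_m (the 'decelerate' mode), on the set where V² = 2a_m r with r > 0, V > 0, one has dF/dt = −(r² + θ² + V²). -/

import Mathlib

/-!
On the parabola V² = 2 a_m r the radicand u = V² + 2 a_m r equals 2V², so √u = √2 V and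
u^{3/2} = 2√2 V³; along the decelerate flow u̇ = -4 a_m V. Differentiating the four summands of
the cost separately (the |θ|³ term is C¹ and θ is frozen, so it contributes nothing) and
substituting r = V²/(2 a_m) leaves -(r² + θ² + V²).
-/

/-- The NMPC terminal cost in terminal-set coordinates (r, θ, V). -/
noncomputable def terminalCost (a_m ω_m r θ V : ℝ) : ℝ :=
  θ ^ 2 * ((Real.sqrt 2 * Real.sqrt (V ^ 2 + 2 * a_m * r) - V) / a_m)
    + |θ| ^ 3 / (3 * ω_m)
    + Real.sqrt 2 * (V ^ 2 + 2 * a_m * r) ^ ((3:ℝ)/2)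
        * (23 * V ^ 2 + 40 * a_m ^ 2 + 46 * a_m * r) / (240 * a_m ^ 3)
    - (V ^ 3 / (3 * a_m) + V * r ^ 2 / a_m
        + 2 * V ^ 3 * r / (3 * a_m ^ 2)
        + 2 * V ^ 5 / (15 * a_m ^ 3))

open Real

theorem rpow_three_halves_eq_mul_sqrt {x : ℝ} (hx : 0 ≤ x) : x ^ (3 / 2 : ℝ) = x * √x := by
  rw [sqrt_eq_rpow, ← rpow_one_add' hx (by norm_num)]
  norm_num

theorem sqrt_two_mul_sq {x : ℝ} (hx : 0 ≤ x) : √(2 * x ^ 2) = √2 * x := by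
  rw [sqrt_mul zero_le_two, sqrt_sq hx]

theorem HasDerivAt.abs_pow_three {f : ℝ → ℝ} {f' x : ℝ} (hf : HasDerivAt f f' x) :
    HasDerivAt (fun y => |f y| ^ 3) (3 * |f x| * f x * f') x := by
  have h := (hasDerivAt_abs_rpow (f x) (p := 3) (by norm_num)).comp x hf
  norm_num [Function.comp_def] at h
  exact h

section Decelerate

variable {a_m : ℝ} {r θ V : ℝ → ℝ} {t : ℝ}

theorem hasDerivAt_radicand_decelerate (hr : HasDerivAt r (-V t) t) (hV : HasDerivAt V (-a_m) t) :
    HasDerivAt (fun s => V s ^ 2 + 2 * a_m * r s) (-(4 * a_m * V t)) t :=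
  ((hV.pow 2).add (hr.const_mul (2 * a_m))).congr_deriv (by push_cast; ring)

theorem hasDerivAt_sqrt_term_decelerate (hr : HasDerivAt r (-V t) t)
    (hθ : HasDerivAt θ 0 t) (hV : HasDerivAt V (-a_m) t) (ha : a_m ≠ 0) (hVpos : 0 < V t)
    (hVr : V t ^ 2 = 2 * a_m * r t) :
    HasDerivAt (fun s => θ s ^ 2 * ((√2 * √(V s ^ 2 + 2 * a_m * r s) - V s) / a_m))
      (-θ t ^ 2) t := by
  have hu : V t ^ 2 + 2 * a_m * r t = 2 * V t ^ 2 := by linarith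
  have hsqrt := (hasDerivAt_radicand_decelerate hr hV).sqrt (by rw [hu]; positivity)
  refine ((hθ.pow 2).mul (((hsqrt.const_mul √2).sub hV).div_const a_m)).congr_deriv ?_
  simp only [Pi.sub_apply, Pi.pow_apply]
  rw [hu, sqrt_two_mul_sq hVpos.le]
  field_simp
  ring

theorem hasDerivAt_rpow_term_decelerate (hr : HasDerivAt r (-V t) t)
    (hV : HasDerivAt V (-a_m) t) (ha : a_m ≠ 0) (hVpos : 0 < V t)
    (hVr : V t ^ 2 = 2 * a_m * r t) :
    HasDerivAt (fun s => √2 * (V s ^ 2 + 2 * a_m * r s) ^ ((3:ℝ)/2)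
        * (23 * V s ^ 2 + 40 * a_m ^ 2 + 46 * a_m * r s) / (240 * a_m ^ 3))
      (-(23 * V t ^ 4 / (6 * a_m ^ 2) + 2 * V t ^ 2)) t := by
  have hu : V t ^ 2 + 2 * a_m * r t = 2 * V t ^ 2 := by linarith
  have hpow :=
    (hasDerivAt_radicand_decelerate hr hV).rpow_const (p := 3 / 2) (Or.inr (by norm_num))
  have hQ := (((hV.pow 2).const_mul 23).add_const (40 * a_m ^ 2)).add (hr.const_mul (46 * a_m))
  refine (((hpow.const_mul √2).mul hQ).div_const (240 * a_m ^ 3)).congr_deriv ?_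
  simp only [Pi.add_apply, Pi.pow_apply]
  rw [show (3 / 2 : ℝ) - 1 = 1 / 2 by norm_num, ← sqrt_eq_rpow, hu,
    rpow_three_halves_eq_mul_sqrt (by positivity), sqrt_two_mul_sq hVpos.le,
    show 46 * a_m * r t = 23 * V t ^ 2 by linarith]
  field_simp
  push_cast
  rw [sq_sqrt zero_le_two]
  ring

theorem hasDerivAt_polynomial_term_decelerate (hr : HasDerivAt r (-V t) t)
    (hV : HasDerivAt V (-a_m) t) (ha : a_m ≠ 0) :
    HasDerivAt (fun s => V s ^ 3 / (3 * a_m) + V s * r s ^ 2 / a_m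
        + 2 * V s ^ 3 * r s / (3 * a_m ^ 2) + 2 * V s ^ 5 / (15 * a_m ^ 3))
      (-(V t ^ 2 + r t ^ 2 + 4 * V t ^ 2 * r t / a_m + 4 * V t ^ 4 / (3 * a_m ^ 2))) t := by
  refine ((((hV.pow 3).div_const (3 * a_m)).add ((hV.mul (hr.pow 2)).div_const a_m)).add
    ((((hV.pow 3).const_mul 2).mul hr).div_const (3 * a_m ^ 2))).add
    (((hV.pow 5).const_mul 2).div_const (15 * a_m ^ 3)) |>.congr_deriv ?_
  simp only [Pi.pow_apply]
  field_simp
  push_cast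
  ring

end Decelerate

theorem terminal_cost_decrease_decelerate_general
    (a_m ω_m : ℝ) (ha : a_m > 0)
    (r θ V : ℝ → ℝ) (t : ℝ)
    (hrdot : HasDerivAt r (-(V t)) t)
    (hθdot : HasDerivAt θ 0 t)
    (hVdot : HasDerivAt V (-a_m) t)
    (hVpos : V t > 0)
    (hVr : (V t) ^ 2 = 2 * a_m * r t) :
    HasDerivAt (fun s => terminalCost a_m ω_m (r s) (θ s) (V s))
      (-((r t) ^ 2 + (θ t) ^ 2 + (V t) ^ 2)) t := by
  have hF := ((hasDerivAt_sqrt_term_decelerate hrdot hθdot hVdot ha.ne' hVpos hVr).add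
    (hθdot.abs_pow_three.div_const (3 * ω_m))).add
    (hasDerivAt_rpow_term_decelerate hrdot hVdot ha.ne' hVpos hVr) |>.sub
    (hasDerivAt_polynomial_term_decelerate hrdot hVdot ha.ne')
  refine hF.congr_deriv ?_
  rw [show r t = V t ^ 2 / (2 * a_m) by field_simp; linarith]
  field_simp
  ring

/-- Along the 'decelerate' mode ṙ = −V, θ̇ = 0, V̇ = −a_m, on the parabola
    V² = 2a_m r with r > 0, V > 0, one has dF/dt = −(r² + θ² + V²). -/
theorem terminal_cost_decrease_decelerate
    (a_m ω_m : ℝ) (ha : a_m > 0) (hω : ω_m > 0)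
    (r θ V : ℝ → ℝ) (t : ℝ)
    (hrdot : HasDerivAt r (-(V t)) t)
    (hθdot : HasDerivAt θ 0 t)
    (hVdot : HasDerivAt V (-a_m) t)
    (hrpos : r t > 0) (hVpos : V t > 0)
    (hVr : (V t) ^ 2 = 2 * a_m * r t) :
    HasDerivAt (fun s => terminalCost a_m ω_m (r s) (θ s) (V s))
      (-((r t) ^ 2 + (θ t) ^ 2 + (V t) ^ 2)) t :=
  terminal_cost_decrease_decelerate_general a_m ω_m ha r θ V t hrdot hθdot hVdot hVpos hVr
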